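/- Let α ∈ ℝ, let I ⊆ ℝ be an open interval, and let q : I → ℝ be a smooth nonvanishing solution of PIV(α) on I. Define σ(x) := (q(x) − 𝓗(x))/2. Then at every x ∈ I with 2σ'(x) + 4α + 2 ≠ 0, one has q(x) = −( σ''(x) + 2x·σ'(x) − 2σ(x) ) / ( 2σ'(x) + 4α + 2 ). -/

import Mathlib

open Real Filter Set Asymptotics MeasureTheory

noncomputable section

/-- The fourth Painlevé equation PIV(α) at a point `x`:
`q'' = (q')²/(2q) + (3/2)q³ + 4xq² + 2(x²-2α)q`. -/
def PIVEq (α : ℝ) (q : ℝ → ℝ) (x : ℝ) : Prop :=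
  deriv (deriv q) x =
    (deriv q x) ^ 2 / (2 * q x) + (3 / 2) * (q x) ^ 3 + 4 * x * (q x) ^ 2 +
      2 * (x ^ 2 - 2 * α) * q x

/-- The Hamiltonian associated with a solution `q` of PIV(α):
`𝓗(x) = q³/4 + xq² + (x²-2α)q - (q')²/(4q)`. -/
def Ham (α : ℝ) (q : ℝ → ℝ) (x : ℝ) : ℝ :=
  (q x) ^ 3 / 4 + x * (q x) ^ 2 + (x ^ 2 - 2 * α) * q x - (deriv q x) ^ 2 / (4 * q x)

/-- The σ-function `σ = (q - 𝓗)/2` associated with a solution `q` of PIV(α). -/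
def sigmaFn (α : ℝ) (q : ℝ → ℝ) : ℝ → ℝ := fun x => (q x - Ham α q x) / 2

/-!
Along a solution of PIV the Hamiltonian satisfies `𝓗' = q² + 2xq` (the `q''` terms cancel by
the equation), so `σ' = (q' - q² - 2xq)/2` and `σ'' = (q'' - 2qq' - 2q - 2xq')/2`. Substituting
these and PIV for `q''`, the expression `σ'' + 2xσ' - 2σ + q(2σ' + 4α + 2)` becomes a rational
function of `x, q, q'` that vanishes identically.
-/

open Topology

section

variable {α x : ℝ} {q : ℝ → ℝ}

theorem hasDerivAt_ham_of_pivEq (hq : DifferentiableAt ℝ q x)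
    (hq' : DifferentiableAt ℝ (deriv q) x) (h0 : q x ≠ 0) (hpiv : PIVEq α q x) :
    HasDerivAt (Ham α q) (q x ^ 2 + 2 * x * q x) x := by
  have hd : HasDerivAt (Ham α q)
      (3 * q x ^ 2 * deriv q x / 4 + (q x ^ 2 + x * (2 * q x * deriv q x)) +
        (2 * x * q x + (x ^ 2 - 2 * α) * deriv q x) -
        (2 * deriv q x * deriv (deriv q) x * (4 * q x) - deriv q x ^ 2 * (4 * deriv q x)) /
          (4 * q x) ^ 2) x := by
    refine HasDerivAt.sub (HasDerivAt.add (HasDerivAt.add ?_ ?_) ?_) ?_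
    · exact ((hq.hasDerivAt.pow 3).div_const 4).congr_deriv (by ring)
    · exact ((hasDerivAt_id x).mul (hq.hasDerivAt.pow 2)).congr_deriv (by simp only [id_eq, Pi.pow_apply]; ring)
    · exact ((((hasDerivAt_id x).pow 2).sub_const (2 * α)).mul hq.hasDerivAt).congr_deriv
        (by simp only [id_eq, Pi.pow_apply]; ring)
    · exact ((hq'.hasDerivAt.pow 2).div (hq.hasDerivAt.const_mul 4) (by positivity)).congr_deriv
        (by simp only [Pi.pow_apply]; ring)
  convert hd using 1
  rw [hpiv]
  field_simp
  ring

theorem hasDerivAt_sigmaFn_of_pivEq (hq : DifferentiableAt ℝ q x)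
    (hq' : DifferentiableAt ℝ (deriv q) x) (h0 : q x ≠ 0) (hpiv : PIVEq α q x) :
    HasDerivAt (sigmaFn α q) ((deriv q x - q x ^ 2 - 2 * x * q x) / 2) x :=
  ((hq.hasDerivAt.sub (hasDerivAt_ham_of_pivEq hq hq' h0 hpiv)).div_const 2).congr_deriv
    (by ring)

theorem hasDerivAt_deriv_sigmaFn_of_pivEq
    (h : ∀ᶠ y in 𝓝 x, DifferentiableAt ℝ q y ∧ DifferentiableAt ℝ (deriv q) y ∧
      q y ≠ 0 ∧ PIVEq α q y) :
    HasDerivAt (deriv (sigmaFn α q))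
      ((deriv (deriv q) x - 2 * q x * deriv q x - 2 * q x - 2 * x * deriv q x) / 2) x := by
  obtain ⟨hq, hq', -, -⟩ := h.self_of_nhds
  have hσ' : deriv (sigmaFn α q) =ᶠ[𝓝 x] fun y => (deriv q y - q y ^ 2 - 2 * y * q y) / 2 :=
    h.mono fun y ⟨hqy, hqy', h0, hpiv⟩ => (hasDerivAt_sigmaFn_of_pivEq hqy hqy' h0 hpiv).deriv
  refine HasDerivAt.congr_of_eventuallyEq ?_ hσ'
  refine ((hq'.hasDerivAt.sub (hq.hasDerivAt.pow 2)).sub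
    (((hasDerivAt_id x).const_mul 2).mul hq.hasDerivAt)).div_const 2 |>.congr_deriv ?_
  simp only [id_eq]
  ring

end

theorem piv_q_from_sigma_general (α : ℝ) (I : Set ℝ) (hI : IsOpen I)
    (q : ℝ → ℝ) (hsm : ContDiffOn ℝ (⊤ : ℕ∞) q I) (hq0 : ∀ x ∈ I, q x ≠ 0)
    (hpiv : ∀ x ∈ I, PIVEq α q x) :
    ∀ x ∈ I, 2 * deriv (sigmaFn α q) x + 4 * α + 2 ≠ 0 →
      q x = -(deriv (deriv (sigmaFn α q)) x + 2 * x * deriv (sigmaFn α q) x -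
              2 * sigmaFn α q x) /
            (2 * deriv (sigmaFn α q) x + 4 * α + 2) := by
  intro x hx hne
  have hsm' : ContDiffOn ℝ (⊤ : ℕ∞) (deriv q) I := hsm.deriv_of_isOpen hI (by simp)
  have hnear : ∀ᶠ y in 𝓝 x, DifferentiableAt ℝ q y ∧ DifferentiableAt ℝ (deriv q) y ∧
      q y ≠ 0 ∧ PIVEq α q y := by
    filter_upwards [hI.mem_nhds hx] with y hy
    exact ⟨(hsm.contDiffAt (hI.mem_nhds hy)).differentiableAt (by simp),
      (hsm'.contDiffAt (hI.mem_nhds hy)).differentiableAt (by simp), hq0 y hy, hpiv y hy⟩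
  obtain ⟨hq, hq', h0, hpivx⟩ := hnear.self_of_nhds
  rw [(hasDerivAt_sigmaFn_of_pivEq hq hq' h0 hpivx).deriv] at hne ⊢
  rw [(hasDerivAt_deriv_sigmaFn_of_pivEq hnear).deriv, sigmaFn, Ham, hpivx, eq_div_iff hne]
  field_simp
  ring

theorem piv_q_from_sigma (α : ℝ) (I : Set ℝ) (hI : IsOpen I) (hI' : I.OrdConnected)
    (q : ℝ → ℝ) (hsm : ContDiffOn ℝ (⊤ : ℕ∞) q I) (hq0 : ∀ x ∈ I, q x ≠ 0)
    (hpiv : ∀ x ∈ I, PIVEq α q x) :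
    ∀ x ∈ I, 2 * deriv (sigmaFn α q) x + 4 * α + 2 ≠ 0 →
      q x = -(deriv (deriv (sigmaFn α q)) x + 2 * x * deriv (sigmaFn α q) x -
              2 * sigmaFn α q x) /
            (2 * deriv (sigmaFn α q) x + 4 * α + 2) :=
  piv_q_from_sigma_general α I hI q hsm hq0 hpiv
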